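/- arXiv:2302.01256 — 8 statements merged into one kernel-verified Lean document; each statement's English description precedes it below -/
import Mathlib

section
/- Let X0, X1, X2 : ℝ³ → ℝ³ be C^∞ vector fields which form a basis of ℝ³ at every point and whose Lie brackets satisfy, for C^∞ real functions c¹₁₂, c²₁₂, c¹₀₁, c²₀₁, c¹₀₂, c²₀₂ on ℝ³: [X2,X1] = c¹₁₂·X1 + c²₁₂·X2 + X0, [X1,X0] = c¹₀₁·X1 + c²₀₁·X2, and [X2,X0] = c¹₀₂·X1 + c²₀₂·X2 (pointwise). Let ρ = 1/det(X1,X2,X0) and define, for a C^∞ vector field X, div_ρ(X) = trace(DX) + Dρ(X)/ρ (the divergence with respect to the measure with density ρ, i.e. the Popp volume of the frame). Then div_ρ(X1) = c²₁₂ and div_ρ(X2) = −c¹₁₂; consequently, for every C^∞ function δ : ℝ³ → ℝ, −div_ρ((X1δ)·X1 + (X2δ)·X2) = −X1(X1δ) − X2(X2δ) − c²₁₂·(X1δ) + c¹₁₂·(X2δ). -/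
/-- The Lie bracket of two vector fields on a normed vector space:
`[X, Y](p) = DY(p)(X(p)) − DX(p)(Y(p))`. -/
noncomputable def vlie {E : Type*} [NormedAddCommGroup E] [NormedSpace ℝ E]
    (X Y : E → E) : E → E :=
  fun p => fderiv ℝ Y p (X p) - fderiv ℝ X p (Y p)

/-- The determinant of the 3×3 matrix whose columns are `X1 p`, `X2 p`, `X0 p`. -/
noncomputable def frameDet (X1 X2 X0 : (Fin 3 → ℝ) → Fin 3 → ℝ) (p : Fin 3 → ℝ) : ℝ :=
  Matrix.det (Matrix.of fun i j => ![X1 p, X2 p, X0 p] j i)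

/-- The divergence of `X` with respect to the measure with smooth density `ρ`
relative to Lebesgue measure: `div_ρ(X) = trace(DX) + Dρ(X)/ρ`. -/
noncomputable def divRho (ρ : (Fin 3 → ℝ) → ℝ) (X : (Fin 3 → ℝ) → Fin 3 → ℝ)
    (p : Fin 3 → ℝ) : ℝ :=
  LinearMap.trace ℝ (Fin 3 → ℝ) (fderiv ℝ X p : (Fin 3 → ℝ) →ₗ[ℝ] (Fin 3 → ℝ))
    + fderiv ℝ ρ p (X p) / ρ p

/-!
Let `ω` be the determinant and `b = (X1, X2, X0)`, so that `ρ = 1 / ω(b)`. Jacobi's formula gives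
`D(ω ∘ b)(X) = Σⱼ ω(b₁, …, DXⱼ(X), …, bₙ)`, while for any endomorphism `A` one has
`tr A · ω(b) = Σⱼ ω(b₁, …, A bⱼ, …, bₙ)`. Subtracting, `div_ρ X = Σⱼ θʲ([Xⱼ, X])`, where `θʲ` is
the coframe dual to `b`. For `X = X1, X2` the structure equations read off these components, and
the last identity is the Leibniz rule `div_ρ(f X) = f div_ρ X + X f`.
-/

open Module

namespace AlternatingMap

variable {R M N ι : Type*} [CommRing R] [AddCommGroup M] [Module R M] [AddCommGroup N]
  [Module R N] [Fintype ι] [DecidableEq ι]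

theorem map_update_basis (ω : M [⋀^ι]→ₗ[R] N) (b : Basis ι R M) (j : ι) (w : M) :
    ω (Function.update b j w) = b.repr w j • ω b := by
  conv_lhs => rw [← b.sum_repr w]
  rw [ω.map_update_sum, Finset.sum_eq_single j]
  · rw [ω.map_update_smul, Function.update_eq_self]
  · intro k _ hkj
    rw [ω.map_update_smul, ω.map_eq_zero_of_eq _ (i := k) (j := j) (by simp [hkj]) hkj,
      smul_zero]
  · simp

theorem sum_map_update_basis_apply (ω : M [⋀^ι]→ₗ[R] N) (b : Basis ι R M) (A : M →ₗ[R] M) :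
    ∑ j, ω (Function.update b j (A (b j))) = LinearMap.trace R M A • ω b := by
  simp only [map_update_basis, ← Finset.sum_smul]
  rw [LinearMap.trace_eq_matrix_trace R b, Matrix.trace]
  simp [LinearMap.toMatrix_apply]

end AlternatingMap

section VectorFields

variable {E : Type*} [NormedAddCommGroup E] [NormedSpace ℝ E]

theorem vlie_self (X : E → E) (p : E) : vlie X X p = 0 := sub_self _

theorem vlie_antisymm (X Y : E → E) (p : E) : vlie Y X p = -vlie X Y p :=
  (neg_sub _ _).symm

theorem vlie_apply_eq_sub (X Y : E → E) (p : E) :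
    vlie X Y p = fderiv ℝ Y p (X p) - fderiv ℝ X p (Y p) := rfl

variable {ι : Type*} [Fintype ι] [DecidableEq ι]

theorem trace_fderiv_sub_fderiv_div_eq_sum_repr_vlie (ω : E [⋀^ι]→L[ℝ] ℝ) (b : ι → E → E)
    {p : E} (hb : ∀ j, DifferentiableAt ℝ (b j) p) (B : Basis ι ℝ E) (hB : ⇑B = fun j => b j p)
    (hω : ω B ≠ 0) (X : E → E) :
    LinearMap.trace ℝ E (fderiv ℝ X p) -
        fderiv ℝ (fun q => ω fun j => b j q) p (X p) / ω (fun j => b j p) =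
      ∑ j, B.repr (vlie (b j) X p) j := by
  have hD : HasFDerivAt (fun q => ω fun j => b j q)
      (∑ j, (ω.toContinuousMultilinearMap.toContinuousLinearMap (fun i => b i p) j).comp
        (fderiv ℝ (b j) p)) p :=
    HasFDerivAt.multilinear_comp (f := ω.toContinuousMultilinearMap)
      fun j => (hb j).hasFDerivAt
  have htrace : LinearMap.trace ℝ E (fderiv ℝ X p) * ω (fun j => b j p) =
      ∑ j, ω (Function.update (fun i => b i p) j (fderiv ℝ X p (b j p))) := by
    simpa [hB] using (ω.toAlternatingMap.sum_map_update_basis_apply B (fderiv ℝ X p)).symm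
  have hsum : LinearMap.trace ℝ E (fderiv ℝ X p) * ω (fun j => b j p) -
      fderiv ℝ (fun q => ω fun j => b j q) p (X p) =
        ∑ j, ω (Function.update (fun i => b i p) j (vlie (b j) X p)) := by
    simp [htrace, hD.fderiv, vlie_apply_eq_sub, ω.map_update_sub]
  have hrepr : ∀ j w, ω (Function.update (fun i => b i p) j w) = B.repr w j * ω fun i => b i p :=
    fun j w => by simpa [hB] using ω.toAlternatingMap.map_update_basis B j w
  rw [hB] at hω
  refine mul_right_cancel₀ hω ?_
  rw [sub_mul, div_mul_cancel₀ _ hω, hsum, Finset.sum_mul]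
  exact Finset.sum_congr rfl fun j _ => hrepr j _

end VectorFields

theorem ContDiff.differentiable_fderiv_apply {E F : Type*} [NormedAddCommGroup E]
    [NormedSpace ℝ E] [NormedAddCommGroup F] [NormedSpace ℝ F] {δ : E → F} {X : E → E}
    (hδ : ContDiff ℝ 2 δ) (hX : Differentiable ℝ X) :
    Differentiable ℝ fun q => fderiv ℝ δ q (X q) :=
  ((hδ.fderiv_right (m := 1) (by norm_num)).differentiable one_ne_zero).clm_apply hX

theorem ContinuousLinearMap.trace_smulRight {R M : Type*} [CommRing R] [TopologicalSpace R]
    [AddCommGroup M] [Module R M] [Module.Free R M] [Module.Finite R M] [TopologicalSpace M]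
    [ContinuousSMul R M] (f : M →L[R] R) (x : M) : LinearMap.trace R M (f.smulRight x) = f x :=
  LinearMap.trace_smulRight (f : M →ₗ[R] R) x

section Divergence

local notation "ℝ³" => Fin 3 → ℝ

theorem divRho_one_div {D : ℝ³ → ℝ} {p : ℝ³} (hD : DifferentiableAt ℝ D p) (hDp : D p ≠ 0)
    (X : ℝ³ → ℝ³) :
    divRho (fun q => 1 / D q) X p =
      LinearMap.trace ℝ ℝ³ (fderiv ℝ X p) - fderiv ℝ D p (X p) / D p := by
  have h := ((hasDerivAt_inv hDp).comp_hasFDerivAt p hD.hasFDerivAt).fderiv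
  simp only [Function.comp_def] at h
  simp only [divRho, one_div, h, smul_apply, smul_eq_mul]
  field_simp
  ring

theorem divRho_fun_add {ρ : ℝ³ → ℝ} {X Y : ℝ³ → ℝ³} {p : ℝ³} (hX : DifferentiableAt ℝ X p)
    (hY : DifferentiableAt ℝ Y p) :
    divRho ρ (fun q => X q + Y q) p = divRho ρ X p + divRho ρ Y p := by
  simp only [divRho, fderiv_fun_add hX hY, ContinuousLinearMap.toLinearMap_add, map_add, add_div]
  ring

theorem divRho_fun_smul {ρ : ℝ³ → ℝ} {f : ℝ³ → ℝ} {X : ℝ³ → ℝ³} {p : ℝ³}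
    (hf : DifferentiableAt ℝ f p) (hX : DifferentiableAt ℝ X p) :
    divRho ρ (fun q => f q • X q) p = f p * divRho ρ X p + fderiv ℝ f p (X p) := by
  simp only [divRho, fderiv_fun_smul hf hX, ContinuousLinearMap.toLinearMap_add,
    ContinuousLinearMap.toLinearMap_smul, map_add, map_smul, ContinuousLinearMap.trace_smulRight,
    smul_eq_mul]
  ring

end Divergence

namespace Matrix

variable {ι : Type*} [Fintype ι] [DecidableEq ι]

noncomputable def detRowContinuousAlternating : (ι → ℝ) [⋀^ι]→L[ℝ] ℝ :=
  { detRowAlternating with cont := continuous_id.matrix_det }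

theorem detRowContinuousAlternating_apply (v : ι → ι → ℝ) :
    detRowContinuousAlternating v = (of v).det := rfl

theorem detRowContinuousAlternating_basis_ne_zero (B : Basis ι ℝ (ι → ℝ)) :
    detRowContinuousAlternating B ≠ 0 := by
  rw [detRowContinuousAlternating_apply, ← Pi.basisFun_det_apply]
  exact ((Pi.basisFun ℝ ι).isUnit_det B).ne_zero

end Matrix

theorem frameDet_eq_detRowContinuousAlternating (X1 X2 X0 : (Fin 3 → ℝ) → Fin 3 → ℝ)
    (p : Fin 3 → ℝ) :
    frameDet X1 X2 X0 p = Matrix.detRowContinuousAlternating fun j => ![X1, X2, X0] j p := by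
  rw [frameDet, Matrix.detRowContinuousAlternating_apply, ← Matrix.det_transpose]
  congr 1
  ext i j
  fin_cases i <;> rfl

theorem divRho_one_div_frameDet (X1 X2 X0 X : (Fin 3 → ℝ) → Fin 3 → ℝ) {p : Fin 3 → ℝ}
    (hX1 : DifferentiableAt ℝ X1 p) (hX2 : DifferentiableAt ℝ X2 p)
    (hX0 : DifferentiableAt ℝ X0 p) (B : Basis (Fin 3) ℝ (Fin 3 → ℝ))
    (hB : ⇑B = ![X1 p, X2 p, X0 p]) :
    divRho (fun q => 1 / frameDet X1 X2 X0 q) X p =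
      B.repr (vlie X1 X p) 0 + B.repr (vlie X2 X p) 1 + B.repr (vlie X0 X p) 2 := by
  set ω : (Fin 3 → ℝ) [⋀^Fin 3]→L[ℝ] ℝ := Matrix.detRowContinuousAlternating
  have hb : ∀ j, DifferentiableAt ℝ (![X1, X2, X0] j) p := by
    intro j; fin_cases j <;> assumption
  have hB' : ⇑B = fun j => ![X1, X2, X0] j p := by
    rw [hB]; ext j : 1; fin_cases j <;> rfl
  have hD : DifferentiableAt ℝ (fun q => ω fun j => ![X1, X2, X0] j q) p :=
    (HasFDerivAt.multilinear_comp (f := ω.1) fun j => (hb j).hasFDerivAt).differentiableAt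
  have hω : ω B ≠ 0 := Matrix.detRowContinuousAlternating_basis_ne_zero B
  simp only [frameDet_eq_detRowContinuousAlternating]
  rw [divRho_one_div hD (hB' ▸ hω),
    trace_fderiv_sub_fderiv_div_eq_sum_repr_vlie ω _ hb B hB' hω X, Fin.sum_univ_three]
  rfl

theorem divergence_of_frame_popp_general
    (X0 X1 X2 : (Fin 3 → ℝ) → Fin 3 → ℝ)
    (hX0 : ContDiff ℝ (⊤ : ℕ∞) X0) (hX1 : ContDiff ℝ (⊤ : ℕ∞) X1)
    (hX2 : ContDiff ℝ (⊤ : ℕ∞) X2)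
    (c112 c212 c101 c201 c102 c202 : (Fin 3 → ℝ) → ℝ)
    (hbasis : ∀ p, LinearIndependent ℝ ![X1 p, X2 p, X0 p])
    (hbr21 : ∀ p, vlie X2 X1 p = c112 p • X1 p + c212 p • X2 p + X0 p)
    (hbr10 : ∀ p, vlie X1 X0 p = c101 p • X1 p + c201 p • X2 p)
    (hbr20 : ∀ p, vlie X2 X0 p = c102 p • X1 p + c202 p • X2 p)
    (ρ : (Fin 3 → ℝ) → ℝ) (hρ : ρ = fun p => 1 / frameDet X1 X2 X0 p) :
    (∀ p, divRho ρ X1 p = c212 p) ∧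
    (∀ p, divRho ρ X2 p = -c112 p) ∧
    (∀ δ : (Fin 3 → ℝ) → ℝ, ContDiff ℝ (⊤ : ℕ∞) δ → ∀ p,
      -divRho ρ (fun q => (fderiv ℝ δ q (X1 q)) • X1 q + (fderiv ℝ δ q (X2 q)) • X2 q) p
        = -(fderiv ℝ (fun q => fderiv ℝ δ q (X1 q)) p (X1 p))
          - fderiv ℝ (fun q => fderiv ℝ δ q (X2 q)) p (X2 p)
          - c212 p * fderiv ℝ δ p (X1 p) + c112 p * fderiv ℝ δ p (X2 p)) := by
  subst hρ
  have hX0d := hX0.differentiable (by simp)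
  have hX1d := hX1.differentiable (by simp)
  have hX2d := hX2.differentiable (by simp)
  have frame (p) : ∃ B : Basis (Fin 3) ℝ (Fin 3 → ℝ), ⇑B = ![X1 p, X2 p, X0 p] :=
    ⟨basisOfLinearIndependentOfCardEqFinrank (hbasis p) (by simp),
      coe_basisOfLinearIndependentOfCardEqFinrank _ _⟩
  have div_frame (p) : divRho (fun q => 1 / frameDet X1 X2 X0 q) X1 p = c212 p ∧
      divRho (fun q => 1 / frameDet X1 X2 X0 q) X2 p = -c112 p := by
    obtain ⟨B, hB⟩ := frame p
    have hdiv := fun X => divRho_one_div_frameDet X1 X2 X0 X (hX1d p) (hX2d p) (hX0d p) B hB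
    obtain ⟨h1, h2, h0⟩ : X1 p = B 0 ∧ X2 p = B 1 ∧ X0 p = B 2 := by simp [hB]
    constructor
    · rw [hdiv, vlie_self, vlie_antisymm X1 X0, hbr21, hbr10, h0, h1, h2]
      simp
    · rw [hdiv, vlie_self, vlie_antisymm X2 X1, vlie_antisymm X2 X0, hbr21, hbr20, h0, h1, h2]
      simp
  refine ⟨fun p => (div_frame p).1, fun p => (div_frame p).2, fun δ hδ p => ?_⟩
  have hδ2 : ContDiff ℝ 2 δ := hδ.of_le (WithTop.coe_le_coe.2 le_top)
  have hf1 := hδ2.differentiable_fderiv_apply hX1d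
  have hf2 := hδ2.differentiable_fderiv_apply hX2d
  rw [divRho_fun_add ((hf1 p).fun_smul (hX1d p)) ((hf2 p).fun_smul (hX2d p)),
    divRho_fun_smul (hf1 p) (hX1d p), divRho_fun_smul (hf2 p) (hX2d p),
    (div_frame p).1, (div_frame p).2]
  ring

/-- Lemma 3.11 of the paper: for a contact-type frame `X1, X2, X0`
with structure functions `cᵏᵢⱼ`, the divergences with respect to the Popp volume
(density `ρ = 1/det(X1,X2,X0)`) are `div_ρ(X1) = c²₁₂`, `div_ρ(X2) = −c¹₁₂`; hence
the mean-curvature expression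
`−div_ρ((X1δ)X1 + (X2δ)X2) = −X1X1δ − X2X2δ − c²₁₂(X1δ) + c¹₁₂(X2δ)`. -/
theorem divergence_of_frame_popp
    (X0 X1 X2 : (Fin 3 → ℝ) → Fin 3 → ℝ)
    (hX0 : ContDiff ℝ (⊤ : ℕ∞) X0) (hX1 : ContDiff ℝ (⊤ : ℕ∞) X1)
    (hX2 : ContDiff ℝ (⊤ : ℕ∞) X2)
    (c112 c212 c101 c201 c102 c202 : (Fin 3 → ℝ) → ℝ)
    (hc112 : ContDiff ℝ (⊤ : ℕ∞) c112) (hc212 : ContDiff ℝ (⊤ : ℕ∞) c212)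
    (hc101 : ContDiff ℝ (⊤ : ℕ∞) c101) (hc201 : ContDiff ℝ (⊤ : ℕ∞) c201)
    (hc102 : ContDiff ℝ (⊤ : ℕ∞) c102) (hc202 : ContDiff ℝ (⊤ : ℕ∞) c202)
    (hbasis : ∀ p, LinearIndependent ℝ ![X1 p, X2 p, X0 p])
    (hbr21 : ∀ p, vlie X2 X1 p = c112 p • X1 p + c212 p • X2 p + X0 p)
    (hbr10 : ∀ p, vlie X1 X0 p = c101 p • X1 p + c201 p • X2 p)
    (hbr20 : ∀ p, vlie X2 X0 p = c102 p • X1 p + c202 p • X2 p)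
    (ρ : (Fin 3 → ℝ) → ℝ) (hρ : ρ = fun p => 1 / frameDet X1 X2 X0 p) :
    (∀ p, divRho ρ X1 p = c212 p) ∧
    (∀ p, divRho ρ X2 p = -c112 p) ∧
    (∀ δ : (Fin 3 → ℝ) → ℝ, ContDiff ℝ (⊤ : ℕ∞) δ → ∀ p,
      -divRho ρ (fun q => (fderiv ℝ δ q (X1 q)) • X1 q + (fderiv ℝ δ q (X2 q)) • X2 q) p
        = -(fderiv ℝ (fun q => fderiv ℝ δ q (X1 q)) p (X1 p))
          - fderiv ℝ (fun q => fderiv ℝ δ q (X2 q)) p (X2 p)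
          - c212 p * fderiv ℝ δ p (X1 p) + c112 p * fderiv ℝ δ p (X2 p)) :=
  divergence_of_frame_popp_general X0 X1 X2 hX0 hX1 hX2 c112 c212 c101 c201 c102 c202 hbasis hbr21
    hbr10 hbr20 ρ hρ
end

section
/- Let E be a finite-dimensional real normed vector space, X1, X2, X0 : E → E C^∞ vector fields, δ, h : E → ℝ C^∞ functions with (X1δ)² + (X2δ)² = 1 everywhere, and set f = e^h·δ, m = √((X1f)² + (X2f)²), and F = X0(f)/m (smooth near any point with δ = 0, where m = e^h > 0). Then at every point p with δ(p) = 0: (X2δ)(p)·X1(F)(p) − (X1δ)(p)·X2(F)(p) = (X2δ)(p)·X1(X0δ)(p) − (X1δ)(p)·X2(X0δ)(p). (That is, the derivative of X0f/‖∇_Hf‖ along the characteristic direction X_S = (X2δ)X1 − (X1δ)X2 equals X_S(X0δ) on the surface.) -/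
set_option maxHeartbeats 1000000 in
/-- if `δ` satisfies the eikonal equation `(X1δ)² + (X2δ)² = 1`,
`f = e^h·δ`, `m = √((X1f)² + (X2f)²)` and `F = X0f/m`, then on the zero level set of
`δ` the derivative of `F` along the characteristic direction
`X_S = (X2δ)X1 − (X1δ)X2` equals `X_S(X0δ)`. -/
theorem characteristic_derivative_from_defining_function
    {E : Type*} [NormedAddCommGroup E] [NormedSpace ℝ E] [FiniteDimensional ℝ E]
    (X1 X2 X0 : E → E) (δ h : E → ℝ)
    (hX1 : ContDiff ℝ (⊤ : ℕ∞) X1) (hX2 : ContDiff ℝ (⊤ : ℕ∞) X2)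
    (hX0 : ContDiff ℝ (⊤ : ℕ∞) X0)
    (hδ : ContDiff ℝ (⊤ : ℕ∞) δ) (hh : ContDiff ℝ (⊤ : ℕ∞) h)
    (heik : ∀ q, (fderiv ℝ δ q (X1 q)) ^ 2 + (fderiv ℝ δ q (X2 q)) ^ 2 = 1)
    (f : E → ℝ) (hf : f = fun q => Real.exp (h q) * δ q)
    (m F : E → ℝ)
    (hm : m = fun q => Real.sqrt ((fderiv ℝ f q (X1 q)) ^ 2 + (fderiv ℝ f q (X2 q)) ^ 2))
    (hF : F = fun q => fderiv ℝ f q (X0 q) / m q)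
    (p : E) (hp : δ p = 0) :
    (fderiv ℝ δ p (X2 p)) * fderiv ℝ F p (X1 p)
        - (fderiv ℝ δ p (X1 p)) * fderiv ℝ F p (X2 p)
      = (fderiv ℝ δ p (X2 p)) * fderiv ℝ (fun q => fderiv ℝ δ q (X0 q)) p (X1 p)
        - (fderiv ℝ δ p (X1 p)) * fderiv ℝ (fun q => fderiv ℝ δ q (X0 q)) p (X2 p) := by
  have hδd : Differentiable ℝ δ := hδ.differentiable (by simp)
  have hhd : Differentiable ℝ h := hh.differentiable (by simp)
  have key : ∀ (u : E → ℝ) (X : E → E), ContDiff ℝ (⊤ : ℕ∞) u → ContDiff ℝ (⊤ : ℕ∞) X →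
      ContDiff ℝ (⊤ : ℕ∞) (fun q => fderiv ℝ u q (X q)) := fun u X hu hX =>
    (hu.fderiv_right (by simp)).clm_apply hX
  -- shorthand names for the coefficient functions
  set a1 : E → ℝ := fun q => fderiv ℝ δ q (X1 q) with ha1def
  set a2 : E → ℝ := fun q => fderiv ℝ δ q (X2 q) with ha2def
  set a0 : E → ℝ := fun q => fderiv ℝ δ q (X0 q) with ha0def
  set b1 : E → ℝ := fun q => fderiv ℝ h q (X1 q) with hb1def
  set b2 : E → ℝ := fun q => fderiv ℝ h q (X2 q) with hb2def
  set b0 : E → ℝ := fun q => fderiv ℝ h q (X0 q) with hb0def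
  have ha1 : HasFDerivAt a1 (fderiv ℝ a1 p) p :=
    (((key δ X1 hδ hX1).differentiable (by simp)) p).hasFDerivAt
  have ha2 : HasFDerivAt a2 (fderiv ℝ a2 p) p :=
    (((key δ X2 hδ hX2).differentiable (by simp)) p).hasFDerivAt
  have ha0 : HasFDerivAt a0 (fderiv ℝ a0 p) p :=
    (((key δ X0 hδ hX0).differentiable (by simp)) p).hasFDerivAt
  have hb1 : HasFDerivAt b1 (fderiv ℝ b1 p) p :=
    (((key h X1 hh hX1).differentiable (by simp)) p).hasFDerivAt
  have hb2 : HasFDerivAt b2 (fderiv ℝ b2 p) p :=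
    (((key h X2 hh hX2).differentiable (by simp)) p).hasFDerivAt
  have hb0 : HasFDerivAt b0 (fderiv ℝ b0 p) p :=
    (((key h X0 hh hX0).differentiable (by simp)) p).hasFDerivAt
  -- derivative of f
  have hfq : ∀ q : E, HasFDerivAt f
      (Real.exp (h q) • fderiv ℝ δ q + δ q • (Real.exp (h q) • fderiv ℝ h q)) q := by
    intro q
    rw [hf]
    exact ((hhd q).hasFDerivAt.exp).mul (hδd q).hasFDerivAt
  have hfval : ∀ (q v : E),
      fderiv ℝ f q v = Real.exp (h q) * (δ q * fderiv ℝ h q v + fderiv ℝ δ q v) := by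
    intro q v
    rw [(hfq q).fderiv]
    simp
    ring
  -- the reduced functions
  set u1 : E → ℝ := fun q => δ q * b1 q + a1 q with hu1def
  set u2 : E → ℝ := fun q => δ q * b2 q + a2 q with hu2def
  set N : E → ℝ := fun q => δ q * b0 q + a0 q with hNdef
  set g : E → ℝ := fun q => Real.sqrt (u1 q * u1 q + u2 q * u2 q) with hgdef
  have hmg : ∀ q, m q = Real.exp (h q) * g q := by
    intro q
    rw [hm]
    simp only [hfval]
    rw [show (Real.exp (h q) * (δ q * fderiv ℝ h q (X1 q) + fderiv ℝ δ q (X1 q))) ^ 2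
        + (Real.exp (h q) * (δ q * fderiv ℝ h q (X2 q) + fderiv ℝ δ q (X2 q))) ^ 2
        = Real.exp (h q) ^ 2 * (u1 q * u1 q + u2 q * u2 q) by simp [hu1def, hu2def]; ring]
    rw [Real.sqrt_mul (sq_nonneg _), Real.sqrt_sq (Real.exp_pos _).le]
  have hFN : F = fun q => N q * (g q)⁻¹ := by
    funext q
    simp only [hF]
    rw [hmg q, hfval]
    rw [div_eq_mul_inv, mul_inv, show Real.exp (h q) * (δ q * fderiv ℝ h q (X0 q)
        + fderiv ℝ δ q (X0 q)) * ((Real.exp (h q))⁻¹ * (g q)⁻¹)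
        = (Real.exp (h q) * (Real.exp (h q))⁻¹) * ((δ q * fderiv ℝ h q (X0 q)
        + fderiv ℝ δ q (X0 q)) * (g q)⁻¹) by ring,
      mul_inv_cancel₀ (Real.exp_ne_zero _), one_mul]
  -- values at p
  have hu1p : u1 p = a1 p := by simp [hu1def, hp]
  have hu2p : u2 p = a2 p := by simp [hu2def, hp]
  have hsp : u1 p * u1 p + u2 p * u2 p = 1 := by
    rw [hu1p, hu2p, ← sq, ← sq]; exact heik p
  have hgp : g p = 1 := by rw [hgdef]; simp only [hsp, Real.sqrt_one]
  -- derivatives at p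
  set D1 : E →L[ℝ] ℝ := δ p • fderiv ℝ b1 p + b1 p • fderiv ℝ δ p + fderiv ℝ a1 p with hD1
  set D2 : E →L[ℝ] ℝ := δ p • fderiv ℝ b2 p + b2 p • fderiv ℝ δ p + fderiv ℝ a2 p with hD2
  set D0 : E →L[ℝ] ℝ := δ p • fderiv ℝ b0 p + b0 p • fderiv ℝ δ p + fderiv ℝ a0 p with hD0
  set S : E →L[ℝ] ℝ := u1 p • D1 + u1 p • D1 + (u2 p • D2 + u2 p • D2) with hSdef
  have hu1' : HasFDerivAt u1 D1 p := ((hδd p).hasFDerivAt.mul hb1).add ha1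
  have hu2' : HasFDerivAt u2 D2 p := ((hδd p).hasFDerivAt.mul hb2).add ha2
  have hN' : HasFDerivAt N D0 p := ((hδd p).hasFDerivAt.mul hb0).add ha0
  have hs' : HasFDerivAt (fun q => u1 q * u1 q + u2 q * u2 q) S p :=
    (hu1'.mul hu1').add (hu2'.mul hu2')
  have hg' : HasFDerivAt g ((1 / (2 * Real.sqrt 1)) • S) p := by
    have := hs'.sqrt (by rw [hsp]; norm_num)
    rw [hsp] at this
    exact this
  have hginv : HasFDerivAt (fun q => (g q)⁻¹)
      (-(g p ^ 2)⁻¹ • ((1 / (2 * Real.sqrt 1)) • S)) p :=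
    (hasDerivAt_inv (by rw [hgp]; norm_num : g p ≠ 0)).comp_hasFDerivAt p hg'
  have hF'' : HasFDerivAt (fun q => N q * (g q)⁻¹)
      (N p • (-(g p ^ 2)⁻¹ • ((1 / (2 * Real.sqrt 1)) • S)) + (g p)⁻¹ • D0) p :=
    hN'.mul hginv
  rw [hFN, hF''.fderiv]
  -- eikonal differentiated
  have hEc : (fun q => a1 q * a1 q + a2 q * a2 q) = fun _ : E => (1 : ℝ) := by
    funext q
    rw [← sq, ← sq]; exact heik q
  have hE2 : HasFDerivAt (fun q => a1 q * a1 q + a2 q * a2 q)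
      ((a1 p • fderiv ℝ a1 p + a1 p • fderiv ℝ a1 p)
        + (a2 p • fderiv ℝ a2 p + a2 p • fderiv ℝ a2 p)) p := (ha1.mul ha1).add (ha2.mul ha2)
  have hE1 : HasFDerivAt (fun q => a1 q * a1 q + a2 q * a2 q) (0 : E →L[ℝ] ℝ) p := by
    rw [hEc]; exact hasFDerivAt_const 1 p
  have heikd : ∀ v : E, a1 p * fderiv ℝ a1 p v + a2 p * fderiv ℝ a2 p v = 0 := by
    intro v
    have huniq := hE1.unique hE2
    have h2 := congrArg (fun (L : E →L[ℝ] ℝ) => L v) huniq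
    simp at h2
    linarith
  -- unfold and conclude
  have hA1 : fderiv ℝ δ p (X1 p) = a1 p := rfl
  have hA2 : fderiv ℝ δ p (X2 p) = a2 p := rfl
  have e1 := heikd (X1 p)
  have e2 := heikd (X2 p)
  simp only [hSdef, hD1, hD2, hD0, hNdef, ContinuousLinearMap.add_apply,
    ContinuousLinearMap.coe_smul', Pi.smul_apply, smul_eq_mul, hp, hgp, hu1p, hu2p,
    Real.sqrt_one, zero_mul, zero_smul, zero_add, ContinuousLinearMap.zero_apply,
    one_pow, inv_one, one_mul, mul_one, hA1, hA2]
  linear_combination (-(a0 p) * a2 p) * e1 + (a0 p * a1 p) * e2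
end

section
/- On ℝ³ with coordinates (x,y,z), consider the Heisenberg frame X1 = ∂x + (y/2)∂z, X2 = ∂y − (x/2)∂z. Let g : ℝ → ℝ be C^∞ and define, on the open set Ω = {(x,y,z) : (x,y) ≠ (0,0)}, r = √(x²+y²) and f(x,y,z) = z − g(r). Then on Ω: X1f = y/2 − g'(r)x/r, X2f = −x/2 − g'(r)y/r, the quantity m := √((X1f)² + (X2f)²) equals √(r² + 4g'(r)²)/2 > 0, and the mean-curvature expression satisfies (X1(X1f) + X2(X2f))/m + (X1f)·X1(1/m) + (X2f)·X2(1/m) = −2·(4g'(r)³ + r³g''(r)) / (r·(r² + 4g'(r)²)^{3/2}). -/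
/-!
Write `ρ = √(x² + y²)`. The planar parts of `X1`, `X2` are the coordinate vectors, so on a radial
function `h(ρ)` they act as `h'(ρ) x / ρ` and `h'(ρ) y / ρ`, whatever their vertical parts.
Hence `∇_H f = (y/2 - x g'/ρ, -x/2 - y g'/ρ)`, whose norm `√(ρ² + 4 g'²) / 2` is again radial.
The horizontal divergence of `∇_H f` is `-(g'' + g'/ρ)`, and since `x X1f + y X2f = -ρ g'`, the
pairing of `∇_H f` with the horizontal gradient of a radial `h(ρ)` is `-g' h'`. Taking
`h = 1 / ‖∇_H f‖` leaves an identity between rational functions of `ρ`, `g'`, `g''` and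
`√(ρ² + 4 g'²)`.
-/

open Real Filter Topology ContinuousLinearMap

section AxialRadius

variable {E : Type*}

noncomputable def axialRadius (q : ℝ × ℝ × E) : ℝ := √(q.1 ^ 2 + q.2.1 ^ 2)

lemma sq_axialRadius (q : ℝ × ℝ × E) : axialRadius q ^ 2 = q.1 ^ 2 + q.2.1 ^ 2 :=
  sq_sqrt (by positivity)

lemma axialRadius_ne_zero_iff {q : ℝ × ℝ × E} : axialRadius q ≠ 0 ↔ (q.1, q.2.1) ≠ (0, 0) := by
  rw [← pow_ne_zero_iff two_ne_zero, sq_axialRadius, Ne,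
    add_eq_zero_iff_of_nonneg (sq_nonneg q.1) (sq_nonneg q.2.1)]
  simp

variable [NormedAddCommGroup E]

lemma continuous_axialRadius : Continuous (axialRadius : ℝ × ℝ × E → ℝ) := by
  unfold axialRadius; fun_prop

variable [NormedSpace ℝ E]

noncomputable def planarInner (q : ℝ × ℝ × E) : (ℝ × ℝ × E) →L[ℝ] ℝ :=
  q.1 • fst ℝ ℝ (ℝ × E) + q.2.1 • (fst ℝ ℝ E).comp (snd ℝ ℝ (ℝ × E))

@[simp]
lemma planarInner_apply (q v : ℝ × ℝ × E) : planarInner q v = q.1 * v.1 + q.2.1 * v.2.1 := by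
  simp [planarInner]

lemma hasFDerivAt_axialRadius {q : ℝ × ℝ × E} (hq : axialRadius q ≠ 0) :
    HasFDerivAt axialRadius ((axialRadius q)⁻¹ • planarInner q) q := by
  have hsq :
      HasFDerivAt (fun q : ℝ × ℝ × E => q.1 ^ 2 + q.2.1 ^ 2) ((2 : ℝ) • planarInner q) q := by
    refine (((hasFDerivAt_fst (p := q)).pow 2).add
      (((hasFDerivAt_fst (p := q.2)).comp q hasFDerivAt_snd).pow 2)).congr_fderiv ?_
    ext v <;> simp
  refine (hsq.sqrt (by rwa [← sq_axialRadius, pow_ne_zero_iff two_ne_zero])).congr_fderiv ?_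
  rw [smul_smul, axialRadius]
  congr 1
  field_simp

lemma HasDerivAt.hasFDerivAt_comp_axialRadius {h : ℝ → ℝ} {h' : ℝ} {q : ℝ × ℝ × E}
    (hh : HasDerivAt h h' (axialRadius q)) (hq : axialRadius q ≠ 0) :
    HasFDerivAt (fun q => h (axialRadius q)) ((h' / axialRadius q) • planarInner q) q := by
  refine (hh.comp_hasFDerivAt q (hasFDerivAt_axialRadius hq)).congr_fderiv ?_
  rw [smul_smul, div_eq_mul_inv]

end AxialRadius

section HeisenbergFrame

variable {q : ℝ × ℝ × ℝ}

lemma fderiv_sub_comp_axialRadius_apply {g : ℝ → ℝ} (hg : DifferentiableAt ℝ g (axialRadius q))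
    (hq : axialRadius q ≠ 0) (v : ℝ × ℝ × ℝ) :
    fderiv ℝ (fun q : ℝ × ℝ × ℝ => q.2.2 - g (axialRadius q)) q v
      = v.2.2 - deriv g (axialRadius q) / axialRadius q * planarInner q v := by
  have hz : HasFDerivAt (fun q : ℝ × ℝ × ℝ => q.2.2) ((snd ℝ ℝ ℝ).comp (snd ℝ ℝ (ℝ × ℝ))) q :=
    hasFDerivAt_snd.comp q hasFDerivAt_snd
  have hf : HasFDerivAt (fun q : ℝ × ℝ × ℝ => q.2.2 - g (axialRadius q)) _ q :=
    hz.sub (hg.hasDerivAt.hasFDerivAt_comp_axialRadius hq)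
  simp [hf.fderiv]

lemma fderiv_sub_comp_axialRadius_X1 {g : ℝ → ℝ} (hg : DifferentiableAt ℝ g (axialRadius q))
    (hq : axialRadius q ≠ 0) :
    fderiv ℝ (fun q : ℝ × ℝ × ℝ => q.2.2 - g (axialRadius q)) q (1, 0, q.2.1 / 2)
      = q.2.1 / 2 - q.1 * (deriv g (axialRadius q) / axialRadius q) := by
  rw [fderiv_sub_comp_axialRadius_apply hg hq, planarInner_apply]
  ring

lemma fderiv_sub_comp_axialRadius_X2 {g : ℝ → ℝ} (hg : DifferentiableAt ℝ g (axialRadius q))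
    (hq : axialRadius q ≠ 0) :
    fderiv ℝ (fun q : ℝ × ℝ × ℝ => q.2.2 - g (axialRadius q)) q (0, 1, -(q.1 / 2))
      = -(q.1 / 2) - q.2.1 * (deriv g (axialRadius q) / axialRadius q) := by
  rw [fderiv_sub_comp_axialRadius_apply hg hq, planarInner_apply]
  ring

-- With `a = G'`, these are the horizontal gradient `(X1 F, X2 F)` of `F = z - G(ρ)`.
lemma horizontal_divergence_of_radial {a : ℝ → ℝ} {a' : ℝ} (ha : HasDerivAt a a' (axialRadius q))
    (hq : axialRadius q ≠ 0) :
    fderiv ℝ (fun q : ℝ × ℝ × ℝ => q.2.1 / 2 - q.1 * (a (axialRadius q) / axialRadius q)) q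
        (1, 0, q.2.1 / 2)
      + fderiv ℝ (fun q : ℝ × ℝ × ℝ => -(q.1 / 2) - q.2.1 * (a (axialRadius q) / axialRadius q)) q
        (0, 1, -(q.1 / 2))
      = -(a' + a (axialRadius q) / axialRadius q) := by
  have hx : HasFDerivAt (fun q : ℝ × ℝ × ℝ => q.1) (fst ℝ ℝ (ℝ × ℝ)) q := hasFDerivAt_fst
  have hy : HasFDerivAt (fun q : ℝ × ℝ × ℝ => q.2.1) ((fst ℝ ℝ ℝ).comp (snd ℝ ℝ (ℝ × ℝ))) q :=
    hasFDerivAt_fst.comp q hasFDerivAt_snd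
  have hk := (ha.div (hasDerivAt_id _) hq).hasFDerivAt_comp_axialRadius hq
  have h₁ : HasFDerivAt (fun q : ℝ × ℝ × ℝ => q.2.1 / 2 - q.1 * (a (axialRadius q) / axialRadius q))
      _ q := (hy.mul_const 2⁻¹).sub (hx.mul hk)
  have h₂ : HasFDerivAt
      (fun q : ℝ × ℝ × ℝ => -(q.1 / 2) - q.2.1 * (a (axialRadius q) / axialRadius q)) _ q :=
    (hx.mul_const 2⁻¹).neg.sub (hy.mul hk)
  rw [h₁.fderiv, h₂.fderiv]
  simp only [sub_apply, add_apply, neg_apply, smul_apply, comp_apply, coe_fst', coe_snd',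
    planarInner_apply, id_eq, smul_eq_mul, mul_one, mul_zero, add_zero, zero_add, zero_sub,
    neg_zero, neg_add_rev]
  field_simp
  linear_combination (a' * axialRadius q - a (axialRadius q)) * sq_axialRadius q

lemma horizontal_gradient_pairing_radial {a h' : ℝ} {h : ℝ → ℝ}
    (hh : HasDerivAt h h' (axialRadius q)) (hq : axialRadius q ≠ 0) :
    (q.2.1 / 2 - q.1 * (a / axialRadius q))
        * fderiv ℝ (fun q => h (axialRadius q)) q (1, 0, q.2.1 / 2)
      + (-(q.1 / 2) - q.2.1 * (a / axialRadius q))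
        * fderiv ℝ (fun q => h (axialRadius q)) q (0, 1, -(q.1 / 2))
      = -a * h' := by
  rw [(hh.hasFDerivAt_comp_axialRadius hq).fderiv]
  simp only [smul_apply, planarInner_apply, smul_eq_mul, mul_one, mul_zero, add_zero, zero_add]
  field_simp
  linear_combination 2 * a * h' * sq_axialRadius q

end HeisenbergFrame

lemma hasDerivAt_two_div_sqrt_sq_add {a : ℝ → ℝ} {a' s : ℝ} (ha : HasDerivAt a a' s)
    (hs : s ≠ 0) :
    HasDerivAt (fun t => 2 / √(t ^ 2 + 4 * a t ^ 2))
      (-2 * (s + 4 * a s * a') / √(s ^ 2 + 4 * a s ^ 2) ^ 3) s := by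
  have hu : 0 < s ^ 2 + 4 * a s ^ 2 := by positivity
  have hpoly : HasDerivAt (fun t => t ^ 2 + 4 * a t ^ 2) (2 * s + 4 * (2 * a s * a')) s :=
    ((hasDerivAt_pow 2 s).add ((ha.pow 2).const_mul 4)).congr_deriv (by ring)
  refine ((hasDerivAt_const s (2 : ℝ)).div (hpoly.sqrt hu.ne') (sqrt_pos.2 hu).ne').congr_deriv ?_
  field_simp
  rw [sq_sqrt hu.le]
  ring

lemma sqrt_horizontal_gradient_sq {x y a r : ℝ} (hr : r ≠ 0) (hxy : x ^ 2 + y ^ 2 = r ^ 2) :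
    √((y / 2 - x * (a / r)) ^ 2 + (-(x / 2) - y * (a / r)) ^ 2) = √(r ^ 2 + 4 * a ^ 2) / 2 := by
  have h : (y / 2 - x * (a / r)) ^ 2 + (-(x / 2) - y * (a / r)) ^ 2
      = (r ^ 2 + 4 * a ^ 2) / 2 ^ 2 := by
    field_simp
    linear_combination (r ^ 2 + 4 * a ^ 2) * hxy
  rw [h, sqrt_div' _ (sq_nonneg 2), sqrt_sq zero_le_two]

lemma rotational_mean_curvature_identity {r a b : ℝ} (hr : r ≠ 0) :
    -(b + a / r) / (√(r ^ 2 + 4 * a ^ 2) / 2)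
        + -a * (-2 * (r + 4 * a * b) / √(r ^ 2 + 4 * a ^ 2) ^ 3)
      = -2 * (4 * a ^ 3 + r ^ 3 * b) / (r * (r ^ 2 + 4 * a ^ 2) ^ ((3 : ℝ) / 2)) := by
  have hK : √(r ^ 2 + 4 * a ^ 2) ^ 2 = r ^ 2 + 4 * a ^ 2 := sq_sqrt (by positivity)
  have hK₀ : √(r ^ 2 + 4 * a ^ 2) ≠ 0 := by positivity
  rw [rpow_div_two_eq_sqrt 3 (by positivity), show (3 : ℝ) = (3 : ℕ) by norm_num, rpow_natCast]
  generalize √(r ^ 2 + 4 * a ^ 2) = K at hK hK₀ ⊢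
  field_simp
  linear_combination -(a + r * b) * hK

/-- horizontal derivatives and sub-Riemannian mean curvature of a
rotational surface `{z = g(√(x²+y²))}` in the Heisenberg group, away from the axis.
The frame is `X1 = ∂x + (y/2)∂z`, `X2 = ∂y − (x/2)∂z` and `f(x,y,z) = z − g(r)`. -/
theorem rotational_surface_heisenberg_mean_curvature
    (g : ℝ → ℝ) (hg : ContDiff ℝ (⊤ : ℕ∞) g)
    (X1 X2 : ℝ × ℝ × ℝ → ℝ × ℝ × ℝ)
    (hX1 : X1 = fun p => (1, 0, p.2.1 / 2))
    (hX2 : X2 = fun p => (0, 1, -(p.1 / 2)))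
    (f : ℝ × ℝ × ℝ → ℝ)
    (hf : f = fun p => p.2.2 - g (Real.sqrt (p.1 ^ 2 + p.2.1 ^ 2)))
    (X1f X2f m : ℝ × ℝ × ℝ → ℝ)
    (hX1f : X1f = fun q => fderiv ℝ f q (X1 q))
    (hX2f : X2f = fun q => fderiv ℝ f q (X2 q))
    (hm : m = fun q => Real.sqrt ((X1f q) ^ 2 + (X2f q) ^ 2))
    (p : ℝ × ℝ × ℝ) (hp : (p.1, p.2.1) ≠ ((0 : ℝ), (0 : ℝ)))
    (r : ℝ) (hr : r = Real.sqrt (p.1 ^ 2 + p.2.1 ^ 2)) :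
    X1f p = p.2.1 / 2 - deriv g r * p.1 / r ∧
    X2f p = -(p.1 / 2) - deriv g r * p.2.1 / r ∧
    m p = Real.sqrt (r ^ 2 + 4 * (deriv g r) ^ 2) / 2 ∧
    0 < m p ∧
    (fderiv ℝ X1f p (X1 p) + fderiv ℝ X2f p (X2 p)) / m p
        + X1f p * fderiv ℝ (fun q => 1 / m q) p (X1 p)
        + X2f p * fderiv ℝ (fun q => 1 / m q) p (X2 p)
      = -2 * (4 * (deriv g r) ^ 3 + r ^ 3 * deriv (deriv g) r)
          / (r * (r ^ 2 + 4 * (deriv g r) ^ 2) ^ ((3 : ℝ) / 2)) := by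
  replace hf : f = fun q => q.2.2 - g (axialRadius q) := hf
  replace hr : r = axialRadius p := hr
  subst hX1 hX2 hf hr
  obtain ⟨hg₁, hg'⟩ := contDiff_infty_iff_deriv.mp hg
  have hg₂ : Differentiable ℝ (deriv g) := (contDiff_infty_iff_deriv.mp hg').1
  have hp₀ : axialRadius p ≠ 0 := axialRadius_ne_zero_iff.mpr hp
  have hΩ : ∀ᶠ q in 𝓝 p, axialRadius q ≠ 0 :=
    continuous_axialRadius.continuousAt.eventually_ne hp₀
  have hX1f_near : X1f =ᶠ[𝓝 p]
      fun q => q.2.1 / 2 - q.1 * (deriv g (axialRadius q) / axialRadius q) :=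
    hΩ.mono fun q hq => (congrFun hX1f q).trans (fderiv_sub_comp_axialRadius_X1 (hg₁ _) hq)
  have hX2f_near : X2f =ᶠ[𝓝 p]
      fun q => -(q.1 / 2) - q.2.1 * (deriv g (axialRadius q) / axialRadius q) :=
    hΩ.mono fun q hq => (congrFun hX2f q).trans (fderiv_sub_comp_axialRadius_X2 (hg₁ _) hq)
  have hm_near : ∀ᶠ q in 𝓝 p,
      m q = √(axialRadius q ^ 2 + 4 * deriv g (axialRadius q) ^ 2) / 2 := by
    filter_upwards [hΩ, hX1f_near, hX2f_near] with q hq h₁ h₂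
    simp only [hm, h₁, h₂, sqrt_horizontal_gradient_sq hq (sq_axialRadius q).symm]
  have hm_inv_near : (fun q => 1 / m q) =ᶠ[𝓝 p]
      fun q => 2 / √(axialRadius q ^ 2 + 4 * deriv g (axialRadius q) ^ 2) :=
    hm_near.mono fun q hq => by simp only [hq, one_div_div]
  refine ⟨by rw [hX1f_near.self_of_nhds]; ring, by rw [hX2f_near.self_of_nhds]; ring,
    hm_near.self_of_nhds, by rw [hm_near.self_of_nhds]; positivity, ?_⟩
  rw [hX1f_near.fderiv_eq, hX2f_near.fderiv_eq,
    horizontal_divergence_of_radial (hg₂ _).hasDerivAt hp₀, add_assoc, hm_inv_near.fderiv_eq, hX1f_near.self_of_nhds, hX2f_near.self_of_nhds,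
    horizontal_gradient_pairing_radial (hasDerivAt_two_div_sqrt_sq_add (hg₂ _).hasDerivAt hp₀) hp₀,
    hm_near.self_of_nhds]
  exact rotational_mean_curvature_identity hp₀
end

section
/- On ℝ³ with coordinates (x,y,z), consider the Heisenberg frame X1 = ∂x + (y/2)∂z, X2 = ∂y − (x/2)∂z. Let g : ℝ → ℝ be C^∞ and define, on Ω = {(x,y,z) : (x,y) ≠ (0,0)}, r = √(x²+y²), f(x,y,z) = z − g(r), m = √((X1f)² + (X2f)²) = √(r²+4g'(r)²)/2, and F = 1/m (note ∂z f = 1, so F = X0f/‖∇_Hf‖ for X0 = ∂z). Let X_S act on smooth functions u by X_S(u) = ((X2f)·X1(u) − (X1f)·X2(u))/m. Then at every point of Ω: 2·X_S(F) − F² = 16·g'(r)·(r·g''(r) − g'(r)) / (r² + 4g'(r)²)². -/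
/-!
Off the `z`-axis everything is radial. With `ρ = √(x² + y²)` and `a = g'(ρ)` one has
`X1 f = y/2 - a x/ρ`, `X2 f = -x/2 - a y/ρ`, hence `m = √(ρ² + 4a²)/2`, and `F = 1/m` is a
function of `ρ` alone. For a radial function `u(ρ)`, `X_S u = (x X2 f - y X1 f) u'(ρ) / (ρ m)`,
and `x X2 f - y X1 f = -ρ²/2`: the contributions of `g'` cancel. So `X_S F = -ρ F'(ρ)/(2m)`,
and the claim becomes a one-variable identity in `ρ`, `g'(ρ)`, `g''(ρ)`.
-/

open Real Filter Topology

lemma sq_add_sq_pos_of_ne {a b : ℝ} (h : (a, b) ≠ ((0 : ℝ), (0 : ℝ))) : 0 < a ^ 2 + b ^ 2 := by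
  rw [Ne, Prod.mk.injEq, not_and_or] at h
  rcases h with h | h <;> positivity

noncomputable def planarRadius (q : ℝ × ℝ × ℝ) : ℝ := √(q.1 ^ 2 + q.2.1 ^ 2)

lemma planarRadius_sq (q : ℝ × ℝ × ℝ) : planarRadius q ^ 2 = q.1 ^ 2 + q.2.1 ^ 2 :=
  sq_sqrt (by positivity)

lemma planarRadius_pos {q : ℝ × ℝ × ℝ} (hq : (q.1, q.2.1) ≠ ((0 : ℝ), (0 : ℝ))) :
    0 < planarRadius q :=
  sqrt_pos.2 (sq_add_sq_pos_of_ne hq)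

lemma fderiv_planarNormSq_apply (q v : ℝ × ℝ × ℝ) :
    fderiv ℝ (fun q : ℝ × ℝ × ℝ => q.1 ^ 2 + q.2.1 ^ 2) q v = 2 * (q.1 * v.1 + q.2.1 * v.2.1) := by
  have hx : HasFDerivAt (fun q : ℝ × ℝ × ℝ => q.1) (ContinuousLinearMap.fst ℝ ℝ (ℝ × ℝ)) q :=
    hasFDerivAt_fst
  have hy : HasFDerivAt (fun q : ℝ × ℝ × ℝ => q.2.1)
      ((ContinuousLinearMap.fst ℝ ℝ ℝ).comp (ContinuousLinearMap.snd ℝ ℝ (ℝ × ℝ))) q :=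
    hasFDerivAt_fst.comp q hasFDerivAt_snd
  rw [((hx.pow 2).fun_add (hy.pow 2)).fderiv]
  simp
  ring

lemma isOpen_setOf_ne_axis : IsOpen {q : ℝ × ℝ × ℝ | (q.1, q.2.1) ≠ ((0 : ℝ), (0 : ℝ))} :=
  isOpen_compl_singleton.preimage (by fun_prop)

section

variable {q : ℝ × ℝ × ℝ}

lemma differentiableAt_planarRadius (hq : (q.1, q.2.1) ≠ ((0 : ℝ), (0 : ℝ))) :
    DifferentiableAt ℝ planarRadius q :=
  (by fun_prop : DifferentiableAt ℝ (fun q : ℝ × ℝ × ℝ => q.1 ^ 2 + q.2.1 ^ 2) q).sqrt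
    (sq_add_sq_pos_of_ne hq).ne'

lemma fderiv_planarRadius_apply (hq : (q.1, q.2.1) ≠ ((0 : ℝ), (0 : ℝ))) (v : ℝ × ℝ × ℝ) :
    fderiv ℝ planarRadius q v = (q.1 * v.1 + q.2.1 * v.2.1) / planarRadius q := by
  have hρ := (planarRadius_pos hq).ne'
  unfold planarRadius at hρ ⊢
  rw [fderiv_sqrt (f := fun q : ℝ × ℝ × ℝ => q.1 ^ 2 + q.2.1 ^ 2) (by fun_prop)
    (sq_add_sq_pos_of_ne hq).ne']
  simp only [FunLike.coe_smul, Pi.smul_apply, fderiv_planarNormSq_apply, smul_eq_mul]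
  field_simp

lemma hasFDerivAt_comp_planarRadius {h : ℝ → ℝ} {h' : ℝ} (hh : HasDerivAt h h' (planarRadius q))
    (hq : (q.1, q.2.1) ≠ ((0 : ℝ), (0 : ℝ))) :
    HasFDerivAt (fun q => h (planarRadius q)) (h' • fderiv ℝ planarRadius q) q :=
  hh.comp_hasFDerivAt q (differentiableAt_planarRadius hq).hasFDerivAt

noncomputable def rotationalDefiningFunction (g : ℝ → ℝ) (q : ℝ × ℝ × ℝ) : ℝ :=
  q.2.2 - g (planarRadius q)

lemma fderiv_rotationalDefiningFunction_apply {g : ℝ → ℝ}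
    (hg : DifferentiableAt ℝ g (planarRadius q)) (hq : (q.1, q.2.1) ≠ ((0 : ℝ), (0 : ℝ)))
    (v : ℝ × ℝ × ℝ) :
    fderiv ℝ (rotationalDefiningFunction g) q v
      = v.2.2 - deriv g (planarRadius q) * (q.1 * v.1 + q.2.1 * v.2.1) / planarRadius q := by
  have hz : HasFDerivAt (fun q : ℝ × ℝ × ℝ => q.2.2)
      ((ContinuousLinearMap.snd ℝ ℝ ℝ).comp (ContinuousLinearMap.snd ℝ ℝ (ℝ × ℝ))) q :=
    hasFDerivAt_snd.comp q hasFDerivAt_snd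
  unfold rotationalDefiningFunction
  rw [(hz.fun_sub (hasFDerivAt_comp_planarRadius hg.hasDerivAt hq)).fderiv]
  simp [fderiv_planarRadius_apply hq]
  ring

lemma fderiv_rotationalDefiningFunction_horizontal {g : ℝ → ℝ}
    (hg : DifferentiableAt ℝ g (planarRadius q)) (hq : (q.1, q.2.1) ≠ ((0 : ℝ), (0 : ℝ))) :
    fderiv ℝ (rotationalDefiningFunction g) q (1, 0, q.2.1 / 2)
        = q.2.1 / 2 - deriv g (planarRadius q) * q.1 / planarRadius q ∧
      fderiv ℝ (rotationalDefiningFunction g) q (0, 1, -(q.1 / 2))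
        = -(q.1 / 2) - deriv g (planarRadius q) * q.2.1 / planarRadius q := by
  simp only [fderiv_rotationalDefiningFunction_apply hg hq]
  constructor <;> ring

end

noncomputable def radialGradientNorm (g : ℝ → ℝ) (s : ℝ) : ℝ := √(s ^ 2 + 4 * deriv g s ^ 2) / 2

lemma sqrt_horizontalGradient_sq {x y ρ a : ℝ} (hρ : ρ ^ 2 = x ^ 2 + y ^ 2) (hρ0 : ρ ≠ 0) :
    √((y / 2 - a * x / ρ) ^ 2 + (-(x / 2) - a * y / ρ) ^ 2) = √(ρ ^ 2 + 4 * a ^ 2) / 2 := by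
  have : (y / 2 - a * x / ρ) ^ 2 + (-(x / 2) - a * y / ρ) ^ 2 = (ρ ^ 2 + 4 * a ^ 2) / 2 ^ 2 := by
    field_simp
    linear_combination -(ρ ^ 2 + 4 * a ^ 2) * hρ
  rw [this, sqrt_div' _ (by positivity), sqrt_sq zero_le_two]

-- `x X2 f - y X1 f = -ρ²/2`, the cancellation behind `X_S u = -ρ u'(ρ)/(2m)` for radial `u`.
lemma horizontalGradient_cross {x y ρ a c : ℝ} (hρ : ρ ^ 2 = x ^ 2 + y ^ 2) (hρ0 : ρ ≠ 0) :
    (-(x / 2) - a * y / ρ) * (c * (x / ρ)) - (y / 2 - a * x / ρ) * (c * (y / ρ)) = -(c * ρ / 2) := by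
  field_simp
  linear_combination c * ρ * hρ

lemma hasDerivAt_inv_radialGradientNorm {g : ℝ → ℝ} {r : ℝ} (hg : DifferentiableAt ℝ (deriv g) r)
    (hr : r ≠ 0) :
    HasDerivAt (fun s => (radialGradientNorm g s)⁻¹)
      (-2 * (r + 4 * deriv g r * deriv (deriv g) r) / √(r ^ 2 + 4 * deriv g r ^ 2) ^ 3) r := by
  have hpos : 0 < r ^ 2 + 4 * deriv g r ^ 2 := by positivity
  have hu : HasDerivAt (fun s => s ^ 2 + 4 * deriv g s ^ 2)
      (2 * r + 4 * (2 * deriv g r * deriv (deriv g) r)) r := by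
    simpa using (hasDerivAt_pow 2 r).fun_add ((hg.hasDerivAt.pow 2).const_mul 4)
  refine (((hu.sqrt hpos.ne').div_const 2).inv (by positivity)).congr_deriv ?_
  have hT : √(r ^ 2 + 4 * deriv g r ^ 2) ≠ 0 := (sqrt_pos.2 hpos).ne'
  field_simp

lemma a3_integrand_identity {r a b : ℝ} (hr : r ≠ 0) :
    2 * (-(-2 * (r + 4 * a * b) / √(r ^ 2 + 4 * a ^ 2) ^ 3 * r / 2) / (√(r ^ 2 + 4 * a ^ 2) / 2))
        - (1 / (√(r ^ 2 + 4 * a ^ 2) / 2)) ^ 2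
      = 16 * a * (r * b - a) / (r ^ 2 + 4 * a ^ 2) ^ 2 := by
  have hpos : 0 < r ^ 2 + 4 * a ^ 2 := by positivity
  have hT : √(r ^ 2 + 4 * a ^ 2) ^ 2 = r ^ 2 + 4 * a ^ 2 := sq_sqrt hpos.le
  have hT0 : √(r ^ 2 + 4 * a ^ 2) ≠ 0 := (sqrt_pos.2 hpos).ne'
  generalize √(r ^ 2 + 4 * a ^ 2) = T at hT hT0 ⊢
  rw [← hT]
  field_simp
  linear_combination (-4) * hT

/-- the integrand of the third Steiner coefficient for the rotational
surface `{z = g(√(x²+y²))}` in the Heisenberg group: with `f(x,y,z) = z − g(r)`,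
`m = √((X1f)² + (X2f)²) = √(r²+4g'(r)²)/2`, `F = 1/m`, and
`X_S(u) = ((X2f)·X1(u) − (X1f)·X2(u))/m`, one has
`2·X_S(F) − F² = 16·g'(r)·(r·g''(r) − g'(r))/(r² + 4g'(r)²)²`. -/
theorem rotational_surface_heisenberg_a3_integrand
    (g : ℝ → ℝ) (hg : ContDiff ℝ (⊤ : ℕ∞) g)
    (X1 X2 : ℝ × ℝ × ℝ → ℝ × ℝ × ℝ)
    (hX1 : X1 = fun p => (1, 0, p.2.1 / 2))
    (hX2 : X2 = fun p => (0, 1, -(p.1 / 2)))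
    (f : ℝ × ℝ × ℝ → ℝ)
    (hf : f = fun p => p.2.2 - g (Real.sqrt (p.1 ^ 2 + p.2.1 ^ 2)))
    (X1f X2f m F : ℝ × ℝ × ℝ → ℝ)
    (hX1f : X1f = fun q => fderiv ℝ f q (X1 q))
    (hX2f : X2f = fun q => fderiv ℝ f q (X2 q))
    (hm : m = fun q => Real.sqrt ((X1f q) ^ 2 + (X2f q) ^ 2))
    (hF : F = fun q => 1 / m q)
    (p : ℝ × ℝ × ℝ) (hp : (p.1, p.2.1) ≠ ((0 : ℝ), (0 : ℝ)))
    (r : ℝ) (hr : r = Real.sqrt (p.1 ^ 2 + p.2.1 ^ 2)) :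
    m p = Real.sqrt (r ^ 2 + 4 * (deriv g r) ^ 2) / 2 ∧
    2 * ((X2f p * fderiv ℝ F p (X1 p) - X1f p * fderiv ℝ F p (X2 p)) / m p)
        - (F p) ^ 2
      = 16 * deriv g r * (r * deriv (deriv g) r - deriv g r)
          / (r ^ 2 + 4 * (deriv g r) ^ 2) ^ 2 := by
  have hg1 : Differentiable ℝ g := hg.differentiable (by simp)
  have hg2 : Differentiable ℝ (deriv g) :=
    (contDiff_infty_iff_deriv.mp hg).2.differentiable (by simp)
  have hXf : ∀ q : ℝ × ℝ × ℝ, (q.1, q.2.1) ≠ ((0 : ℝ), (0 : ℝ)) →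
      X1f q = q.2.1 / 2 - deriv g (planarRadius q) * q.1 / planarRadius q ∧
      X2f q = -(q.1 / 2) - deriv g (planarRadius q) * q.2.1 / planarRadius q := by
    intro q hq
    have hfρ : f = rotationalDefiningFunction g := hf
    rw [hX1f, hX2f, hX1, hX2, hfρ]
    exact fderiv_rotationalDefiningFunction_horizontal (hg1 _) hq
  have hmΩ : ∀ q : ℝ × ℝ × ℝ, (q.1, q.2.1) ≠ ((0 : ℝ), (0 : ℝ)) →
      m q = radialGradientNorm g (planarRadius q) := by
    intro q hq
    simp only [hm, (hXf q hq).1, (hXf q hq).2]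
    exact sqrt_horizontalGradient_sq (planarRadius_sq q) (planarRadius_pos hq).ne'
  have hFloc : F =ᶠ[𝓝 p] fun q => (radialGradientNorm g (planarRadius q))⁻¹ := by
    filter_upwards [isOpen_setOf_ne_axis.mem_nhds hp] with q hq
    simp only [hF, hmΩ q hq, one_div]
  obtain rfl : r = planarRadius p := hr
  have hFD := (hasFDerivAt_comp_planarRadius (hasDerivAt_inv_radialGradientNorm (hg2 _)
    (planarRadius_pos hp).ne') hp).congr_of_eventuallyEq hFloc
  refine ⟨hmΩ p hp, ?_⟩
  rw [hFD.fderiv, hF, hX1, hX2]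
  simp only [(hXf p hp).1, (hXf p hp).2, hmΩ p hp, radialGradientNorm, FunLike.coe_smul,
    Pi.smul_apply, smul_eq_mul, fderiv_planarRadius_apply hp, mul_one, mul_zero, add_zero,
    zero_add]
  rw [horizontalGradient_cross (planarRadius_sq p) (planarRadius_pos hp).ne']
  exact a3_integrand_identity (planarRadius_pos hp).ne'
end

section
/- On ℝ⁴ with coordinates (x,y,z,w), let k > 0 and consider the SU(2) frame X1(p) = k·(z, −w, −x, y), X2(p) = k·(w, z, −y, −x). Let f(x,y,z,w) = w. Then X1f = k·y and X2f = −k·x, so m := √((X1f)² + (X2f)²) = k·√(x²+y²), and at every point p = (x,y,z,w) with w = 0 and (x,y) ≠ (0,0), the mean-curvature expression vanishes: (X1(X1f) + X2(X2f))/m + (X1f)·X1(1/m) + (X2f)·X2(1/m) = 0 at p. -/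
/-!
Both horizontal derivatives of `f = w` are linear, `X1f = k y` and `X2f = -k x`, so
`X1X1f + X2X2f = -2k²w`. The function `1/m = 1/(k√(x²+y²))` depends only on `r = x² + y²`, so
`X1f·X1(1/m) + X2f·X2(1/m)` is a multiple of `X1f·X1r + X2f·X2r = -2k²w r`. Both terms vanish on
`{w = 0}` wherever `r ≠ 0`.
-/

local notation "ℝ⁴" => ℝ × ℝ × ℝ × ℝ

lemma fderiv_one_div_const_mul_sqrt_apply {E : Type*} [NormedAddCommGroup E] [NormedSpace ℝ E]
    {k : ℝ} (hk : k ≠ 0) {r : E → ℝ} {p : E} (hr : DifferentiableAt ℝ r p) (hpos : 0 < r p)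
    (v : E) :
    fderiv ℝ (fun q => 1 / (k * √(r q))) p v = -fderiv ℝ r p v / (2 * k * r p * √(r p)) := by
  have hsqrt : 0 < √(r p) := Real.sqrt_pos.2 hpos
  have hφ : HasDerivAt (fun t => (k * √t)⁻¹) (-(k * (1 / (2 * √(r p)))) / (k * √(r p)) ^ 2)
      (r p) :=
    ((Real.hasDerivAt_sqrt hpos.ne').const_mul k).fun_inv (mul_ne_zero hk hsqrt.ne')
  simp only [one_div]
  rw [show (fun q => (k * √(r q))⁻¹) = (fun t => (k * √t)⁻¹) ∘ r from rfl,
    (hφ.comp_hasFDerivAt p hr.hasFDerivAt).fderiv, smul_apply, smul_eq_mul]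
  field_simp
  rw [Real.sq_sqrt hpos.le]
  ring

lemma fderiv_coord_w_apply (p v : ℝ⁴) : fderiv ℝ (fun q : ℝ⁴ => q.2.2.2) p v = v.2.2.2 := by
  rw [(hasFDerivAt_id p).snd.snd.snd.fderiv]
  simp

lemma fderiv_const_mul_coord_y_apply (k : ℝ) (p v : ℝ⁴) :
    fderiv ℝ (fun q : ℝ⁴ => k * q.2.1) p v = k * v.2.1 := by
  rw [((hasFDerivAt_id p).snd.fst.const_mul k).fderiv]
  simp

lemma fderiv_neg_const_mul_coord_x_apply (k : ℝ) (p v : ℝ⁴) :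
    fderiv ℝ (fun q : ℝ⁴ => -(k * q.1)) p v = -(k * v.1) := by
  rw [((hasFDerivAt_id p).fst.const_mul k).fun_neg.fderiv]
  simp

lemma fderiv_sq_coord_x_add_sq_coord_y_apply (p v : ℝ⁴) :
    fderiv ℝ (fun q : ℝ⁴ => q.1 ^ 2 + q.2.1 ^ 2) p v = 2 * (p.1 * v.1 + p.2.1 * v.2.1) := by
  rw [(((hasFDerivAt_id p).fst.pow 2).fun_add ((hasFDerivAt_id p).snd.fst.pow 2)).fderiv]
  simp only [pow_one, nsmul_eq_mul, Nat.cast_ofNat, ContinuousLinearMap.comp_id, add_apply,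
    smul_apply, smul_eq_mul, ContinuousLinearMap.comp_apply, ContinuousLinearMap.coe_fst',
    ContinuousLinearMap.coe_snd', Nat.add_one_sub_one]
  ring

lemma sqrt_sq_const_mul_add_sq_neg_const_mul {k : ℝ} (hk : 0 ≤ k) (x y : ℝ) :
    √((k * y) ^ 2 + (-(k * x)) ^ 2) = k * √(x ^ 2 + y ^ 2) := by
  rw [show (k * y) ^ 2 + (-(k * x)) ^ 2 = k ^ 2 * (x ^ 2 + y ^ 2) by ring,
    Real.sqrt_mul (sq_nonneg k), Real.sqrt_sq hk]

/-- for the `SU(2)` frame `X1 = k(z,−w,−x,y)`, `X2 = k(w,z,−y,−x)` and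
the defining function `f = w` of the model surface, one has `X1f = k·y`,
`X2f = −k·x`, `m = √((X1f)² + (X2f)²) = k√(x²+y²)`, and at every point with `w = 0`
and `(x,y) ≠ (0,0)` the sub-Riemannian mean-curvature expression vanishes. -/
theorem su2_model_surface_mean_curvature_zero
    (k : ℝ) (hk : 0 < k)
    (X1 X2 : ℝ × ℝ × ℝ × ℝ → ℝ × ℝ × ℝ × ℝ)
    (hX1 : X1 = fun p => (k * p.2.2.1, -(k * p.2.2.2), -(k * p.1), k * p.2.1))
    (hX2 : X2 = fun p => (k * p.2.2.2, k * p.2.2.1, -(k * p.2.1), -(k * p.1)))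
    (f : ℝ × ℝ × ℝ × ℝ → ℝ) (hf : f = fun p => p.2.2.2)
    (X1f X2f m : ℝ × ℝ × ℝ × ℝ → ℝ)
    (hX1f : X1f = fun q => fderiv ℝ f q (X1 q))
    (hX2f : X2f = fun q => fderiv ℝ f q (X2 q))
    (hm : m = fun q => Real.sqrt ((X1f q) ^ 2 + (X2f q) ^ 2)) :
    (∀ p : ℝ × ℝ × ℝ × ℝ,
      X1f p = k * p.2.1 ∧ X2f p = -(k * p.1) ∧
      m p = k * Real.sqrt (p.1 ^ 2 + p.2.1 ^ 2)) ∧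
    (∀ p : ℝ × ℝ × ℝ × ℝ, p.2.2.2 = 0 → (p.1, p.2.1) ≠ ((0 : ℝ), (0 : ℝ)) →
      (fderiv ℝ X1f p (X1 p) + fderiv ℝ X2f p (X2 p)) / m p
          + X1f p * fderiv ℝ (fun q => 1 / m q) p (X1 p)
          + X2f p * fderiv ℝ (fun q => 1 / m q) p (X2 p) = 0) := by
  subst hX1 hX2 hf hX1f hX2f hm
  simp only [fderiv_coord_w_apply, sqrt_sq_const_mul_add_sq_neg_const_mul hk.le, and_self,
    implies_true, true_and]
  intro p hw hxy
  have hr : 0 < p.1 ^ 2 + p.2.1 ^ 2 := by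
    rcases not_and_or.1 fun h => hxy (Prod.ext h.1 h.2) with h | h <;> positivity
  rw [fderiv_const_mul_coord_y_apply, fderiv_neg_const_mul_coord_x_apply,
    fderiv_one_div_const_mul_sqrt_apply (r := fun q : ℝ⁴ => q.1 ^ 2 + q.2.1 ^ 2) hk.ne'
      (by fun_prop) hr,
    fderiv_one_div_const_mul_sqrt_apply (r := fun q : ℝ⁴ => q.1 ^ 2 + q.2.1 ^ 2) hk.ne'
      (by fun_prop) hr,
    fderiv_sq_coord_x_add_sq_coord_y_apply, fderiv_sq_coord_x_add_sq_coord_y_apply]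
  simp only [hw]
  ring
end

section
/- On ℝ⁴ with coordinates (x,y,z,w), let k > 0 and consider the SU(2) frame X1(p) = k·(z, −w, −x, y), X2(p) = k·(w, z, −y, −x), X0(p) = 2k²·(−y, x, −w, z). Let f(x,y,z,w) = w, m = √((X1f)² + (X2f)²) = k√(x²+y²), and F = X0(f)/m = 2kz/√(x²+y²) (smooth on {(x,y) ≠ (0,0)}). Define X_S acting on smooth functions u by X_S(u) = ((X2f)·X1(u) − (X1f)·X2(u))/m. Then at every point p with w = 0 and (x,y) ≠ (0,0): 2·X_S(F)(p) − F(p)² = 4k². -/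
/-!
On `{w = 0}` the horizontal derivatives of `f = w` are `X1f = ky`, `X2f = -kx`, so `m = kρ` with
`ρ = √(x² + y²)` and `F = 2kz/ρ`. Differentiating `F` along `X1 = k(z, 0, -x, y)` and
`X2 = k(0, z, -y, -x)` gives `X_S F = 2k²(1 + z²/ρ²)`, and the `z²/ρ²` terms cancel against `F²`.
-/

theorem sq_add_sq_pos_of_prod_ne_zero {x y : ℝ} (h : (x, y) ≠ (0, 0)) : 0 < x ^ 2 + y ^ 2 := by
  refine lt_of_le_of_ne (by positivity) fun h0 => h ?_
  obtain ⟨hx, hy⟩ := (add_eq_zero_iff_of_nonneg (sq_nonneg x) (sq_nonneg y)).mp h0.symm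
  rw [pow_eq_zero_iff two_ne_zero] at hx hy
  rw [hx, hy]

theorem HasFDerivAt.div_sqrt {E : Type*} [NormedAddCommGroup E] [NormedSpace ℝ E]
    {u s : E → ℝ} {u' s' : E →L[ℝ] ℝ} {q : E}
    (hu : HasFDerivAt u u' q) (hs : HasFDerivAt s s' q) (hpos : 0 < s q) :
    HasFDerivAt (fun x => u x / √(s x))
      ((√(s q))⁻¹ • u' - (u q / (2 * s q * √(s q))) • s') q := by
  have hr : 0 < √(s q) := Real.sqrt_pos.mpr hpos
  have hinv := (hasDerivAt_inv hr.ne').comp_hasFDerivAt q (hs.sqrt hpos.ne')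
  simp only [div_eq_mul_inv]
  refine (hu.mul hinv).congr_fderiv ?_
  ext v
  simp only [add_apply, sub_apply, smul_apply, smul_eq_mul, Function.comp_apply]
  rw [Real.sq_sqrt hpos.le]
  field_simp
  ring

theorem fderiv_w_apply (q v : ℝ × ℝ × ℝ × ℝ) :
    fderiv ℝ (fun p : ℝ × ℝ × ℝ × ℝ => p.2.2.2) q v = v.2.2.2 := by
  rw [(hasFDerivAt_id q).snd.snd.snd.fderiv]
  rfl

theorem fderiv_const_mul_z_div_sqrt_apply (c : ℝ) {q : ℝ × ℝ × ℝ × ℝ}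
    (hq : (q.1, q.2.1) ≠ (0, 0)) (v : ℝ × ℝ × ℝ × ℝ) :
    fderiv ℝ (fun p : ℝ × ℝ × ℝ × ℝ => c * p.2.2.1 / √(p.1 ^ 2 + p.2.1 ^ 2)) q v =
      c * v.2.2.1 / √(q.1 ^ 2 + q.2.1 ^ 2) -
        c * q.2.2.1 * (q.1 * v.1 + q.2.1 * v.2.1) /
          ((q.1 ^ 2 + q.2.1 ^ 2) * √(q.1 ^ 2 + q.2.1 ^ 2)) := by
  have hz := (hasFDerivAt_snd (𝕜 := ℝ) (p := q)).snd.fst.const_mul c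
  have hρ : HasFDerivAt (fun p : ℝ × ℝ × ℝ × ℝ => p.1 ^ 2 + p.2.1 ^ 2) _ q :=
    ((hasFDerivAt_fst (𝕜 := ℝ) (p := q)).pow 2).add
      ((hasFDerivAt_snd (𝕜 := ℝ) (p := q)).fst.pow 2)
  have hpos := sq_add_sq_pos_of_prod_ne_zero hq
  have hr := Real.sqrt_pos.mpr hpos
  rw [(hz.div_sqrt hρ hpos).fderiv]
  simp only [Nat.add_one_sub_one, pow_one, nsmul_eq_mul, Nat.cast_ofNat, smul_add, sub_apply,
    smul_apply, ContinuousLinearMap.comp_apply, ContinuousLinearMap.coe_snd',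
    ContinuousLinearMap.coe_fst', smul_eq_mul, add_apply]
  field_simp

/-- for the `SU(2)` frame `X1 = k(z,−w,−x,y)`, `X2 = k(w,z,−y,−x)`,
`X0 = 2k²(−y,x,−w,z)` and the model surface `{w = 0}` with defining function `f = w`,
setting `m = √((X1f)² + (X2f)²)`, `F = X0f/m` and
`X_S(u) = ((X2f)·X1(u) − (X1f)·X2(u))/m`, at every point with `w = 0` and
`(x,y) ≠ (0,0)` one has `F = 2kz/√(x²+y²)` and `2·X_S(F) − F² = 4k²`. -/
theorem su2_model_surface_a3_integrand
    (k : ℝ) (hk : 0 < k)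
    (X1 X2 X0 : ℝ × ℝ × ℝ × ℝ → ℝ × ℝ × ℝ × ℝ)
    (hX1 : X1 = fun p => (k * p.2.2.1, -(k * p.2.2.2), -(k * p.1), k * p.2.1))
    (hX2 : X2 = fun p => (k * p.2.2.2, k * p.2.2.1, -(k * p.2.1), -(k * p.1)))
    (hX0 : X0 = fun p =>
      (-(2 * k ^ 2 * p.2.1), 2 * k ^ 2 * p.1, -(2 * k ^ 2 * p.2.2.2), 2 * k ^ 2 * p.2.2.1))
    (f : ℝ × ℝ × ℝ × ℝ → ℝ) (hf : f = fun p => p.2.2.2)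
    (X1f X2f m F : ℝ × ℝ × ℝ × ℝ → ℝ)
    (hX1f : X1f = fun q => fderiv ℝ f q (X1 q))
    (hX2f : X2f = fun q => fderiv ℝ f q (X2 q))
    (hm : m = fun q => Real.sqrt ((X1f q) ^ 2 + (X2f q) ^ 2))
    (hF : F = fun q => fderiv ℝ f q (X0 q) / m q)
    (p : ℝ × ℝ × ℝ × ℝ) (hw : p.2.2.2 = 0) (hxy : (p.1, p.2.1) ≠ ((0 : ℝ), (0 : ℝ))) :
    F p = 2 * k * p.2.2.1 / Real.sqrt (p.1 ^ 2 + p.2.1 ^ 2) ∧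
    2 * ((X2f p * fderiv ℝ F p (X1 p) - X1f p * fderiv ℝ F p (X2 p)) / m p)
        - (F p) ^ 2 = 4 * k ^ 2 := by
  subst hf
  have hm' : ∀ q : ℝ × ℝ × ℝ × ℝ, m q = k * √(q.1 ^ 2 + q.2.1 ^ 2) := by
    intro q
    rw [hm, hX1f, hX2f, hX1, hX2]
    simp only [fderiv_w_apply]
    rw [show (k * q.2.1) ^ 2 + (-(k * q.1)) ^ 2 = k ^ 2 * (q.1 ^ 2 + q.2.1 ^ 2) by ring,
      Real.sqrt_mul (sq_nonneg k), Real.sqrt_sq hk.le]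
  have hF' : F = fun q => 2 * k * q.2.2.1 / √(q.1 ^ 2 + q.2.1 ^ 2) := by
    funext q
    simp only [hF, hX0, hm', fderiv_w_apply]
    field_simp
  refine ⟨by rw [hF'], ?_⟩
  have hρ := sq_add_sq_pos_of_prod_ne_zero hxy
  rw [hF', hm', fderiv_const_mul_z_div_sqrt_apply _ hxy, fderiv_const_mul_z_div_sqrt_apply _ hxy,
    hX1f, hX2f, hX1, hX2]
  simp only [fderiv_w_apply, hw]
  have hr := Real.sq_sqrt hρ.le
  have hr0 := Real.sqrt_pos.mpr hρ
  field_simp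
  linear_combination (-4 * (p.1 ^ 2 + p.2.1 ^ 2)) * hr
end

section
/- On ℝ⁴ with coordinates (x,y,z,w), let k > 0 and consider the SL(2,ℝ) frame X1(p) = k·(y, x, w, z), X2(p) = k·(x, −y, z, −w). Let f(x,y,z,w) = y − z. Then X1f = k·(x − w) and X2f = −k·(y + z), so m := √((X1f)² + (X2f)²) = k·√((x−w)² + (y+z)²), and at every point p = (x,y,z,w) with y = z and (x−w, y+z) ≠ (0,0), the mean-curvature expression vanishes: (X1(X1f) + X2(X2f))/m + (X1f)·X1(1/m) + (X2f)·X2(1/m) = 0 at p. -/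
/-- for the `SL(2,ℝ)` frame `X1 = k(y,x,w,z)`, `X2 = k(x,−y,z,−w)` and
the defining function `f = y − z` of the model surface, one has `X1f = k(x−w)`,
`X2f = −k(y+z)`, `m = √((X1f)² + (X2f)²) = k√((x−w)² + (y+z)²)`, and at every point
with `y = z` and `(x−w, y+z) ≠ (0,0)` the mean-curvature expression vanishes. -/
theorem sl2_model_surface_mean_curvature_zero
    (k : ℝ) (hk : 0 < k)
    (X1 X2 : ℝ × ℝ × ℝ × ℝ → ℝ × ℝ × ℝ × ℝ)
    (hX1 : X1 = fun p => (k * p.2.1, k * p.1, k * p.2.2.2, k * p.2.2.1))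
    (hX2 : X2 = fun p => (k * p.1, -(k * p.2.1), k * p.2.2.1, -(k * p.2.2.2)))
    (f : ℝ × ℝ × ℝ × ℝ → ℝ) (hf : f = fun p => p.2.1 - p.2.2.1)
    (X1f X2f m : ℝ × ℝ × ℝ × ℝ → ℝ)
    (hX1f : X1f = fun q => fderiv ℝ f q (X1 q))
    (hX2f : X2f = fun q => fderiv ℝ f q (X2 q))
    (hm : m = fun q => Real.sqrt ((X1f q) ^ 2 + (X2f q) ^ 2)) :
    (∀ p : ℝ × ℝ × ℝ × ℝ,
      X1f p = k * (p.1 - p.2.2.2) ∧ X2f p = -(k * (p.2.1 + p.2.2.1)) ∧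
      m p = k * Real.sqrt ((p.1 - p.2.2.2) ^ 2 + (p.2.1 + p.2.2.1) ^ 2)) ∧
    (∀ p : ℝ × ℝ × ℝ × ℝ, p.2.1 = p.2.2.1 →
      (p.1 - p.2.2.2, p.2.1 + p.2.2.1) ≠ ((0 : ℝ), (0 : ℝ)) →
      (fderiv ℝ X1f p (X1 p) + fderiv ℝ X2f p (X2 p)) / m p
          + X1f p * fderiv ℝ (fun q => 1 / m q) p (X1 p)
          + X2f p * fderiv ℝ (fun q => 1 / m q) p (X2 p) = 0) := by
  -- derivative of f
  have hdf : ∀ q : ℝ × ℝ × ℝ × ℝ, HasFDerivAt f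
      (((ContinuousLinearMap.fst ℝ ℝ (ℝ × ℝ)).comp (ContinuousLinearMap.snd ℝ ℝ (ℝ × ℝ × ℝ)))
        - ((ContinuousLinearMap.fst ℝ ℝ ℝ).comp
            ((ContinuousLinearMap.snd ℝ ℝ (ℝ × ℝ)).comp
              (ContinuousLinearMap.snd ℝ ℝ (ℝ × ℝ × ℝ))))) q := by
    intro q
    rw [hf]
    exact (hasFDerivAt_snd.fst).sub (hasFDerivAt_snd.snd.fst)
  have key1 : ∀ p : ℝ × ℝ × ℝ × ℝ, X1f p = k * (p.1 - p.2.2.2) := by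
    intro p
    rw [hX1f]
    simp only [(hdf p).fderiv, hX1, ContinuousLinearMap.coe_sub', Pi.sub_apply,
      ContinuousLinearMap.coe_comp', Function.comp_apply, ContinuousLinearMap.coe_fst',
      ContinuousLinearMap.coe_snd']
    ring
  have key2 : ∀ p : ℝ × ℝ × ℝ × ℝ, X2f p = -(k * (p.2.1 + p.2.2.1)) := by
    intro p
    rw [hX2f]
    simp only [(hdf p).fderiv, hX2, ContinuousLinearMap.coe_sub', Pi.sub_apply,
      ContinuousLinearMap.coe_comp', Function.comp_apply, ContinuousLinearMap.coe_fst',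
      ContinuousLinearMap.coe_snd']
    ring
  have keym : ∀ p : ℝ × ℝ × ℝ × ℝ,
      m p = k * Real.sqrt ((p.1 - p.2.2.2) ^ 2 + (p.2.1 + p.2.2.1) ^ 2) := by
    intro p
    rw [hm]
    simp only [key1, key2]
    rw [show (k * (p.1 - p.2.2.2)) ^ 2 + (-(k * (p.2.1 + p.2.2.1))) ^ 2
        = k ^ 2 * ((p.1 - p.2.2.2) ^ 2 + (p.2.1 + p.2.2.1) ^ 2) by ring,
      Real.sqrt_mul (by positivity), Real.sqrt_sq hk.le]
  refine ⟨fun p => ⟨key1 p, key2 p, keym p⟩, fun p hyz hne => ?_⟩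
  -- derivatives of X1f and X2f
  have hA : ∀ q : ℝ × ℝ × ℝ × ℝ, HasFDerivAt (fun q : ℝ × ℝ × ℝ × ℝ => k * (q.1 - q.2.2.2))
      (k • ((ContinuousLinearMap.fst ℝ ℝ (ℝ × ℝ × ℝ))
        - ((ContinuousLinearMap.snd ℝ ℝ ℝ).comp
            ((ContinuousLinearMap.snd ℝ ℝ (ℝ × ℝ)).comp
              (ContinuousLinearMap.snd ℝ ℝ (ℝ × ℝ × ℝ)))))) q := by
    intro q
    exact (hasFDerivAt_fst.sub hasFDerivAt_snd.snd.snd).const_mul k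
  have hB : ∀ q : ℝ × ℝ × ℝ × ℝ, HasFDerivAt (fun q : ℝ × ℝ × ℝ × ℝ => -(k * (q.2.1 + q.2.2.1)))
      (-(k • (((ContinuousLinearMap.fst ℝ ℝ (ℝ × ℝ)).comp (ContinuousLinearMap.snd ℝ ℝ (ℝ × ℝ × ℝ)))
        + ((ContinuousLinearMap.fst ℝ ℝ ℝ).comp
            ((ContinuousLinearMap.snd ℝ ℝ (ℝ × ℝ)).comp
              (ContinuousLinearMap.snd ℝ ℝ (ℝ × ℝ × ℝ))))))) q := by
    intro q
    exact ((hasFDerivAt_snd.fst.add hasFDerivAt_snd.snd.fst).const_mul k).neg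
  have hX1f_eq : X1f = fun q : ℝ × ℝ × ℝ × ℝ => k * (q.1 - q.2.2.2) := funext key1
  have hX2f_eq : X2f = fun q : ℝ × ℝ × ℝ × ℝ => -(k * (q.2.1 + q.2.2.1)) := funext key2
  -- first term vanishes
  have t1 : fderiv ℝ X1f p (X1 p) + fderiv ℝ X2f p (X2 p) = 0 := by
    rw [hX1f_eq, hX2f_eq, (hA p).fderiv, (hB p).fderiv, hX1, hX2]
    simp only [ContinuousLinearMap.coe_smul', ContinuousLinearMap.coe_sub',
      ContinuousLinearMap.coe_add', ContinuousLinearMap.neg_apply, Pi.smul_apply,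
      Pi.sub_apply, Pi.add_apply, ContinuousLinearMap.coe_comp', Function.comp_apply,
      ContinuousLinearMap.coe_fst', ContinuousLinearMap.coe_snd', smul_eq_mul]
    rw [hyz]; ring
  -- the function under the square root
  set s : ℝ × ℝ × ℝ × ℝ → ℝ :=
    fun q => (k * (q.1 - q.2.2.2)) * (k * (q.1 - q.2.2.2))
      + (-(k * (q.2.1 + q.2.2.1))) * (-(k * (q.2.1 + q.2.2.1))) with hs_def
  have hs : ∀ q : ℝ × ℝ × ℝ × ℝ, HasFDerivAt s
      ((k * (q.1 - q.2.2.2)) • (k • ((ContinuousLinearMap.fst ℝ ℝ (ℝ × ℝ × ℝ))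
          - ((ContinuousLinearMap.snd ℝ ℝ ℝ).comp
              ((ContinuousLinearMap.snd ℝ ℝ (ℝ × ℝ)).comp
                (ContinuousLinearMap.snd ℝ ℝ (ℝ × ℝ × ℝ))))))
        + (k * (q.1 - q.2.2.2)) • (k • ((ContinuousLinearMap.fst ℝ ℝ (ℝ × ℝ × ℝ))
          - ((ContinuousLinearMap.snd ℝ ℝ ℝ).comp
              ((ContinuousLinearMap.snd ℝ ℝ (ℝ × ℝ)).comp
                (ContinuousLinearMap.snd ℝ ℝ (ℝ × ℝ × ℝ))))))
        + ((-(k * (q.2.1 + q.2.2.1))) •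
            (-(k • (((ContinuousLinearMap.fst ℝ ℝ (ℝ × ℝ)).comp
                (ContinuousLinearMap.snd ℝ ℝ (ℝ × ℝ × ℝ)))
              + ((ContinuousLinearMap.fst ℝ ℝ ℝ).comp
                  ((ContinuousLinearMap.snd ℝ ℝ (ℝ × ℝ)).comp
                    (ContinuousLinearMap.snd ℝ ℝ (ℝ × ℝ × ℝ)))))))
          + (-(k * (q.2.1 + q.2.2.1))) •
            (-(k • (((ContinuousLinearMap.fst ℝ ℝ (ℝ × ℝ)).comp
                (ContinuousLinearMap.snd ℝ ℝ (ℝ × ℝ × ℝ)))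
              + ((ContinuousLinearMap.fst ℝ ℝ ℝ).comp
                  ((ContinuousLinearMap.snd ℝ ℝ (ℝ × ℝ)).comp
                    (ContinuousLinearMap.snd ℝ ℝ (ℝ × ℝ × ℝ))))))))) q := by
    intro q
    exact ((hA q).mul (hA q)).add ((hB q).mul (hB q))
  -- positivity
  have hne' : ¬(p.1 - p.2.2.2 = 0 ∧ p.2.1 + p.2.2.1 = 0) := by
    simpa [Prod.ext_iff] using hne
  have hab : (p.1 - p.2.2.2) ^ 2 + (p.2.1 + p.2.2.1) ^ 2 > 0 := by
    rcases not_and_or.mp hne' with h | h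
    · positivity
    · positivity
  have hsp_pos : 0 < s p := by
    have hsp : s p = k ^ 2 * ((p.1 - p.2.2.2) ^ 2 + (p.2.1 + p.2.2.1) ^ 2) := by
      simp only [hs_def]; ring
    rw [hsp]; positivity
  have hsqrt_pos : 0 < Real.sqrt (s p) := Real.sqrt_pos.mpr hsp_pos
  -- derivative of 1/m
  have hm_inv : (fun q => 1 / m q) = fun q => (Real.sqrt (s q))⁻¹ := by
    funext q
    simp only [one_div, hm, hs_def]
    congr 1
    rw [key1 q, key2 q]
    ring_nf
  have hsqrt : HasFDerivAt (fun q => Real.sqrt (s q))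
      ((1 / (2 * Real.sqrt (s p))) • _) p :=
    (Real.hasDerivAt_sqrt hsp_pos.ne').comp_hasFDerivAt p (hs p)
  have hinv : HasFDerivAt (fun q => (Real.sqrt (s q))⁻¹)
      ((-(Real.sqrt (s p) ^ 2)⁻¹) • ((1 / (2 * Real.sqrt (s p))) • _)) p :=
    (hasDerivAt_inv hsqrt_pos.ne').comp_hasFDerivAt p hsqrt
  rw [t1, hm_inv, hinv.fderiv, key1, key2, hX1, hX2]
  simp only [ContinuousLinearMap.coe_smul', ContinuousLinearMap.coe_sub',
    ContinuousLinearMap.coe_add', ContinuousLinearMap.neg_apply, Pi.smul_apply, Pi.neg_apply,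
    Pi.sub_apply, Pi.add_apply, ContinuousLinearMap.coe_comp', Function.comp_apply,
    ContinuousLinearMap.coe_fst', ContinuousLinearMap.coe_snd', smul_eq_mul]
  rw [hyz]
  ring
end

section
/- On ℝ⁴ with coordinates (x,y,z,w), let k > 0 and consider the SL(2,ℝ) frame X1(p) = k·(y, x, w, z), X2(p) = k·(x, −y, z, −w), and let f(x,y,z,w) = y − z. Then for every p = (x,y,z,w) with xw − yz = 1 and y = z, one has X1f(p) = 0 and X2f(p) = 0 if and only if p = (1,0,0,1) or p = (−1,0,0,−1). That is, the surface {y = z} ∩ {xw − yz = 1} has exactly two characteristic points, corresponding to ± the identity matrix. -/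
lemma fderiv_snd_fst_sub_snd_snd_fst_apply (p v : ℝ × ℝ × ℝ × ℝ) :
    fderiv ℝ (fun q : ℝ × ℝ × ℝ × ℝ => q.2.1 - q.2.2.1) p v = v.2.1 - v.2.2.1 := by
  rw [(hasFDerivAt_snd.fst.fun_sub hasFDerivAt_snd.snd.fst).fderiv]
  rfl

/- In matrix terms `[[x, y], [z, w]]`: `x = w ∧ z = -y` says the matrix commutes with rotations;
being also symmetric, it is scalar, and `det = 1` leaves `±1`. -/
lemma conformal_iff_eq_one_or_neg_one_of_symm {x y z w : ℝ} (hdet : x * w - y * z = 1)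
    (hsym : y = z) :
    (x = w ∧ z = -y) ↔ (x, y, z, w) = (1, 0, 0, 1) ∨ (x, y, z, w) = (-1, 0, 0, -1) := by
  constructor
  · rintro ⟨rfl, hskew⟩
    obtain rfl : y = 0 := by linarith
    obtain rfl : z = 0 := by linarith
    rcases mul_self_eq_one_iff.mp (by linarith : x * x = 1) with rfl | rfl
    · exact Or.inl rfl
    · exact Or.inr rfl
  · rintro (h | h) <;> simp_all

lemma frame_derivs_eq_zero_iff {k : ℝ} (hk : k ≠ 0) (x y z w : ℝ) :
    (k * x - k * w = 0 ∧ -(k * y) - k * z = 0) ↔ (x = w ∧ z = -y) := by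
  rw [← mul_sub, neg_sub_left, neg_eq_zero, ← mul_add, mul_eq_zero, mul_eq_zero]
  simp only [hk, false_or, sub_eq_zero, add_eq_zero_iff_eq_neg]

/-- for the `SL(2,ℝ)` frame `X1 = k(y,x,w,z)`, `X2 = k(x,−y,z,−w)` and
the defining function `f = y − z`, on the surface `{y = z} ∩ {xw − yz = 1}` the
horizontal derivatives `X1f`, `X2f` both vanish exactly at `±(1,0,0,1)`, i.e. the
surface has exactly two characteristic points, corresponding to `±` the identity
matrix. -/
theorem sl2_model_surface_characteristic_points
    (k : ℝ) (hk : 0 < k)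
    (X1 X2 : ℝ × ℝ × ℝ × ℝ → ℝ × ℝ × ℝ × ℝ)
    (hX1 : X1 = fun p => (k * p.2.1, k * p.1, k * p.2.2.2, k * p.2.2.1))
    (hX2 : X2 = fun p => (k * p.1, -(k * p.2.1), k * p.2.2.1, -(k * p.2.2.2)))
    (f : ℝ × ℝ × ℝ × ℝ → ℝ) (hf : f = fun p => p.2.1 - p.2.2.1) :
    ∀ p : ℝ × ℝ × ℝ × ℝ,
      p.1 * p.2.2.2 - p.2.1 * p.2.2.1 = 1 → p.2.1 = p.2.2.1 →
      ((fderiv ℝ f p (X1 p) = 0 ∧ fderiv ℝ f p (X2 p) = 0) ↔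
        (p = (1, 0, 0, 1) ∨ p = (-1, 0, 0, -1))) := by
  rintro ⟨x, y, z, w⟩ hdet hsym
  subst hX1 hX2 hf
  rw [← conformal_iff_eq_one_or_neg_one_of_symm hdet hsym]
  simp only [fderiv_snd_fst_sub_snd_snd_fst_apply]
  exact frame_derivs_eq_zero_iff hk.ne' x y z w
end
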